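/- arXiv:2602.07929 — 7 statements merged into one kernel-verified Lean document; each statement's English description precedes it below -/
import Mathlib

section
/- Cancellation law for Minkowski sums of polytopes: if P₁, P₂, Q are polytopes in ℝⁿ with P₁ + Q = P₂ + Q (Minkowski sum), then P₁ = P₂. -/
/-!
Rådström cancellation. If `a ∈ A` and `A + C ⊆ B + C`, iterating the inclusion gives
`k • a + c ∈ k • B + C`, and for convex `B` the `k`-fold Minkowski sum `k • B` is the dilate
`(k : ℝ) • B`. Dividing by `k` puts `a` within `diam C / k` of `B`; letting `k → ∞`, `a` lies in
the closure of `B`, which is `B` itself when `B` is closed. Polytopes are compact and convex.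
-/

open Pointwise Metric

theorem Set.nsmul_add_subset_nsmul_add {α : Type*} [AddCommMonoid α] {A B C : Set α}
    (h : A + C ⊆ B + C) (k : ℕ) : k • A + C ⊆ k • B + C := by
  induction k with
  | zero => rfl
  | succ k ih =>
    calc (k + 1) • A + C = k • A + (A + C) := by rw [succ_nsmul, add_assoc]
      _ ⊆ k • A + (B + C) := Set.add_subset_add_left h
      _ = (k • A + C) + B := by rw [add_comm B, add_assoc]
      _ ⊆ (k • B + C) + B := Set.add_subset_add_right ih
      _ = (k + 1) • B + C := by rw [succ_nsmul, add_right_comm]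

theorem Convex.nsmul_eq_smul {𝕜 E : Type*} [Field 𝕜] [LinearOrder 𝕜] [IsStrictOrderedRing 𝕜]
    [AddCommGroup E] [Module 𝕜 E] {s : Set E} (hs : Convex 𝕜 s) (hne : s.Nonempty) (k : ℕ) :
    k • s = (k : 𝕜) • s := by
  induction k with
  | zero => rw [zero_nsmul, Nat.cast_zero, Set.zero_smul_set hne]
  | succ k ih =>
    rw [succ_nsmul, ih, Nat.cast_succ, hs.add_smul k.cast_nonneg zero_le_one, one_smul]

section Radstrom

variable {E : Type*} [NormedAddCommGroup E] [NormedSpace ℝ E] {A B C : Set E}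

theorem Convex.exists_dist_le_diam_div_of_add_subset_add (hB : Convex ℝ B)
    (hC : Bornology.IsBounded C) (hCne : C.Nonempty) (h : A + C ⊆ B + C) {a : E} (ha : a ∈ A)
    {k : ℕ} (hk : 0 < k) : ∃ b ∈ B, dist a b ≤ diam C / k := by
  obtain ⟨c, hc⟩ := hCne
  have hBne : B.Nonempty := (Set.nonempty_of_mem (h (Set.add_mem_add ha hc))).of_add_left
  have hmem : k • a + c ∈ (k : ℝ) • B + C := by
    rw [← hB.nsmul_eq_smul hBne]
    exact Set.nsmul_add_subset_nsmul_add h k (Set.add_mem_add (Set.nsmul_mem_nsmul ha) hc)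
  obtain ⟨_, ⟨b, hb, rfl⟩, c', hc', heq⟩ := hmem
  have hk' : (k : ℝ) ≠ 0 := Nat.cast_ne_zero.mpr hk.ne'
  have heq' : (k : ℝ) • b + c' = (k : ℝ) • a + c := by
    simpa only [Nat.cast_smul_eq_nsmul] using heq
  have hab : a - b = (k : ℝ)⁻¹ • (c' - c) := by
    rw [eq_inv_smul_iff₀ hk', smul_sub, sub_eq_sub_iff_add_eq_add, ← heq', add_comm]
  refine ⟨b, hb, ?_⟩
  rw [dist_eq_norm, hab, norm_smul, norm_inv, Real.norm_natCast, inv_mul_eq_div, ← dist_eq_norm]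
  gcongr
  exact dist_le_diam_of_mem hC hc' hc

theorem Convex.subset_of_add_subset_add_right (hB : Convex ℝ B) (hBc : IsClosed B)
    (hC : Bornology.IsBounded C) (hCne : C.Nonempty) (h : A + C ⊆ B + C) : A ⊆ B := by
  intro a ha
  rw [← hBc.closure_eq, Metric.mem_closure_iff]
  intro ε hε
  obtain ⟨k, hk⟩ := exists_nat_gt (diam C / ε)
  have hkpos : (0 : ℝ) < k := (div_nonneg diam_nonneg hε.le).trans_lt hk
  obtain ⟨b, hb, hab⟩ :=
    hB.exists_dist_le_diam_div_of_add_subset_add hC hCne h ha (Nat.cast_pos.mp hkpos)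
  refine ⟨b, hb, hab.trans_lt ?_⟩
  rwa [div_lt_iff₀ hkpos, mul_comm, ← div_lt_iff₀ hε]

theorem Convex.eq_of_add_eq_add_right (hA : Convex ℝ A) (hAc : IsClosed A) (hB : Convex ℝ B)
    (hBc : IsClosed B) (hC : Bornology.IsBounded C) (hCne : C.Nonempty) (h : A + C = B + C) :
    A = B :=
  (hB.subset_of_add_subset_add_right hBc hC hCne h.le).antisymm
    (hA.subset_of_add_subset_add_right hAc hC hCne h.ge)

end Radstrom

theorem polytope_minkowski_cancel_general (n : ℕ) (S₁ S₂ S₃ : Set (Fin n → ℝ))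
    (h₁ : S₁.Finite) (h₂ : S₂.Finite) (h₃ : S₃.Finite)
    (hn₃ : S₃.Nonempty)
    (P₁ P₂ Q : Set (Fin n → ℝ))
    (hP₁ : P₁ = convexHull ℝ S₁) (hP₂ : P₂ = convexHull ℝ S₂) (hQ : Q = convexHull ℝ S₃)
    (h : P₁ + Q = P₂ + Q) :
    P₁ = P₂ := by
  subst hP₁ hP₂ hQ
  exact (convex_convexHull ℝ S₁).eq_of_add_eq_add_right (h₁.isCompact_convexHull ℝ).isClosed
    (convex_convexHull ℝ S₂) (h₂.isCompact_convexHull ℝ).isClosed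
    (h₃.isCompact_convexHull ℝ).isBounded hn₃.convexHull h

/-- Cancellation law for Minkowski sums of polytopes. -/
theorem polytope_minkowski_cancel (n : ℕ) (S₁ S₂ S₃ : Set (Fin n → ℝ))
    (h₁ : S₁.Finite) (h₂ : S₂.Finite) (h₃ : S₃.Finite)
    (hn₁ : S₁.Nonempty) (hn₂ : S₂.Nonempty) (hn₃ : S₃.Nonempty)
    (P₁ P₂ Q : Set (Fin n → ℝ))
    (hP₁ : P₁ = convexHull ℝ S₁) (hP₂ : P₂ = convexHull ℝ S₂) (hQ : Q = convexHull ℝ S₃)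
    (h : P₁ + Q = P₂ + Q) :
    P₁ = P₂ :=
  polytope_minkowski_cancel_general n S₁ S₂ S₃ h₁ h₂ h₃ hn₃ P₁ P₂ Q hP₁ hP₂ hQ h
end

section
/- The tropical polynomial of a product of two nonzero polynomials is the sum of their tropical polynomials: (F₁F₂)[r] = F₁[r] + F₂[r] for all r ∈ ℝⁿ. -/
/-!
Write `F[r]` as the weighted total degree of `F` for the real weight `r`. Every exponent of
`F₁ F₂` is a sum of exponents of `F₁` and `F₂`, which gives `≤`. Conversely, only the top-weight
parts `P₁, P₂` of `F₁, F₂` contribute to the coefficients of `F₁ F₂` in weight `F₁[r] + F₂[r]`,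
where they give the coefficients of `P₁ P₂`; this product is nonzero because `ℤ[y]` is a domain,
so the weight `F₁[r] + F₂[r]` is attained in `F₁ F₂`.
-/

/-- The tropical polynomial of a nonzero polynomial: `F[r] = max {⟨v, r⟩ : c_v ≠ 0}`. -/
noncomputable def trop {n : ℕ} (F : MvPolynomial (Fin n) ℤ) (r : Fin n → ℝ) : ℝ :=
  sSup ((fun d : Fin n →₀ ℕ => ∑ i, (d i : ℝ) * r i) '' (F.support : Set (Fin n →₀ ℕ)))

namespace MvPolynomial

open Finsupp (weight)

variable {σ R M : Type*} [CommSemiring R]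

theorem le_weightedTotalDegree' [AddCommMonoid M] [SemilatticeSup M] (w : σ → M)
    {p : MvPolynomial σ R} {d : σ →₀ ℕ} (hd : d ∈ p.support) :
    (weight w d : WithBot M) ≤ weightedTotalDegree' w p :=
  Finset.le_sup (f := fun s => (weight w s : WithBot M)) hd

variable [AddCommMonoid M] [LinearOrder M] [IsOrderedCancelAddMonoid M]

theorem weightedTotalDegree'_mul_le (w : σ → M) (p q : MvPolynomial σ R) :
    weightedTotalDegree' w (p * q) ≤ weightedTotalDegree' w p + weightedTotalDegree' w q := by
  classical
  refine (Finset.sup_mono (support_mul p q)).trans (Finset.sup_add_le.mpr fun a ha b hb => ?_)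
  rw [map_add, WithBot.coe_add]
  exact add_le_add (le_weightedTotalDegree' w ha) (le_weightedTotalDegree' w hb)

theorem coeff_mul_of_weight_eq_add {w : σ → M} {p q : MvPolynomial σ R} {m n : M}
    (hp : weightedTotalDegree' w p ≤ m) (hq : weightedTotalDegree' w q ≤ n)
    {d : σ →₀ ℕ} (hd : weight w d = m + n) :
    coeff d (weightedHomogeneousComponent w m p * weightedHomogeneousComponent w n q) =
      coeff d (p * q) := by
  classical
  rw [coeff_mul, coeff_mul]
  refine Finset.sum_congr rfl fun ⟨a, b⟩ hab => ?_
  rw [Finset.HasAntidiagonal.mem_antidiagonal] at hab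
  simp only [coeff_weightedHomogeneousComponent]
  have hab_weight : weight w a + weight w b = m + n := by rw [← map_add, hab, hd]
  have ha : coeff a p ≠ 0 → weight w a ≤ m := fun h =>
    WithBot.coe_le_coe.mp ((le_weightedTotalDegree' w (mem_support_iff.mpr h)).trans hp)
  have hb : coeff b q ≠ 0 → weight w b ≤ n := fun h =>
    WithBot.coe_le_coe.mp ((le_weightedTotalDegree' w (mem_support_iff.mpr h)).trans hq)
  by_cases hma : weight w a = m
  · have hnb : weight w b = n := add_left_cancel (hma ▸ hab_weight)
    simp [hma, hnb]
  · rw [if_neg hma, zero_mul]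
    by_cases hpa : coeff a p = 0
    · rw [hpa, zero_mul]
    · have hqb : coeff b q = 0 := by
        by_contra hqb
        exact (add_lt_add_of_lt_of_le ((ha hpa).lt_of_ne hma) (hb hqb)).ne hab_weight
      rw [hqb, mul_zero]

theorem weightedTotalDegree'_mul [NoZeroDivisors R] (w : σ → M) (p q : MvPolynomial σ R) :
    weightedTotalDegree' w (p * q) = weightedTotalDegree' w p + weightedTotalDegree' w q := by
  refine le_antisymm (weightedTotalDegree'_mul_le w p q) ?_
  rcases eq_or_ne p 0 with rfl | hp
  · simp [weightedTotalDegree'_zero]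
  rcases eq_or_ne q 0 with rfl | hq
  · simp [weightedTotalDegree'_zero]
  obtain ⟨a, ha, hpa⟩ := Finset.exists_mem_eq_sup p.support (support_nonempty.mpr hp)
    fun s => (weight w s : WithBot M)
  obtain ⟨b, hb, hqb⟩ := Finset.exists_mem_eq_sup q.support (support_nonempty.mpr hq)
    fun s => (weight w s : WithBot M)
  change weightedTotalDegree' w p = _ at hpa
  change weightedTotalDegree' w q = _ at hqb
  have hP : weightedHomogeneousComponent w (weight w a) p ≠ 0 := ne_zero_iff.mpr
    ⟨a, by simpa [coeff_weightedHomogeneousComponent] using mem_support_iff.mp ha⟩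
  have hQ : weightedHomogeneousComponent w (weight w b) q ≠ 0 := ne_zero_iff.mpr
    ⟨b, by simpa [coeff_weightedHomogeneousComponent] using mem_support_iff.mp hb⟩
  obtain ⟨d, hd⟩ := ne_zero_iff.mp (mul_ne_zero hP hQ)
  have hdw : weight w d = weight w a + weight w b :=
    (weightedHomogeneousComponent_isWeightedHomogeneous _ p).mul
      (weightedHomogeneousComponent_isWeightedHomogeneous _ q) hd
  rw [coeff_mul_of_weight_eq_add hpa.le hqb.le hdw] at hd
  rw [hpa, hqb, ← WithBot.coe_add, ← hdw]
  exact le_weightedTotalDegree' w (mem_support_iff.mpr hd)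

end MvPolynomial

open MvPolynomial in
theorem coe_trop_eq_weightedTotalDegree' {n : ℕ} {F : MvPolynomial (Fin n) ℤ} (hF : F ≠ 0)
    (r : Fin n → ℝ) : (trop F r : WithBot ℝ) = weightedTotalDegree' r F := by
  have hweight (d : Fin n →₀ ℕ) : Finsupp.weight r d = ∑ i, (d i : ℝ) * r i := by
    simp [Finsupp.weight_apply, Finsupp.sum_fintype]
  rw [trop, ← Finset.sup'_eq_csSup_image _ (support_nonempty.mpr hF), Finset.coe_sup']
  simp only [weightedTotalDegree', hweight]
  rfl

/-- Tropical polynomial of a product of two nonzero polynomials is the sum of their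
tropical polynomials. -/
theorem trop_mul {n : ℕ} (F₁ F₂ : MvPolynomial (Fin n) ℤ) (h₁ : F₁ ≠ 0) (h₂ : F₂ ≠ 0)
    (r : Fin n → ℝ) :
    trop (F₁ * F₂) r = trop F₁ r + trop F₂ r := by
  have h := MvPolynomial.weightedTotalDegree'_mul r F₁ F₂
  rw [← coe_trop_eq_weightedTotalDegree' (mul_ne_zero h₁ h₂),
    ← coe_trop_eq_weightedTotalDegree' h₁, ← coe_trop_eq_weightedTotalDegree' h₂] at h
  exact_mod_cast h
end

section
/- Let A be a finite-dimensional algebra, M a module with Hom_A(M, τM) = 0 (τ-rigid), and N any module. If 0 → N_t → N → N_f → 0 is the canonical sequence of N with respect to the torsion pair (Fac M, M^⊥), then for every quotient module N₀ of N, ⟨g_M, dim N₀⟩ ≤ ⟨g_M, dim N_f⟩ = dim_k Hom_A(N, τM), where g_M is the g-vector of M. -/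
/-!
Every `A`-linear map `N → τM` kills the torsion part `S ∈ Fac M`, because `Hom(M, τM) = 0`;
hence `Hom(N ⧸ S, τM) ≅ Hom(N, τM)`, and since also `Hom(M, N ⧸ S) = 0` the Auslander–Reiten
formula gives `⟨g_M, dim (N ⧸ S)⟩ = dim Hom(N, τM)`. For an arbitrary quotient `N ⧸ S₀` the
formula gives `dim Hom(N ⧸ S₀, τM) - dim Hom(M, N ⧸ S₀) ≤ dim Hom(N, τM)`, as
`Hom(N ⧸ S₀, τM)` embeds into `Hom(N, τM)`.
-/

open Module

section HomSpaces

variable {A X Y : Type*} [Ring A] [AddCommGroup X] [Module A X] [AddCommGroup Y] [Module A Y]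

theorem LinearMap.subsingleton_pi_of_subsingleton {M ι : Type*} [AddCommGroup M] [Module A M]
    [Finite ι] [DecidableEq ι] [Subsingleton (M →ₗ[A] Y)] : Subsingleton ((ι → M) →ₗ[A] Y) :=
  ⟨fun _ _ => LinearMap.pi_ext' fun _ => Subsingleton.elim _ _⟩

theorem Submodule.le_ker_of_surjective_pi {M ι : Type*} [AddCommGroup M] [Module A M] [Finite ι]
    [Subsingleton (M →ₗ[A] Y)] (p : Submodule A X) (π : (ι → M) →ₗ[A] p)
    (hπ : Function.Surjective π) (f : X →ₗ[A] Y) : p ≤ LinearMap.ker f := by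
  classical
  have := LinearMap.subsingleton_pi_of_subsingleton (A := A) (M := M) (Y := Y) (ι := ι)
  intro x hx
  obtain ⟨v, hv⟩ := hπ ⟨x, hx⟩
  have hzero : f.comp (p.subtype.comp π) = 0 := Subsingleton.elim _ _
  simpa [hv] using LinearMap.congr_fun hzero v

theorem Submodule.finrank_linearMap_quotient_eq {k : Type*} [Ring k] [Module k Y]
    [SMulCommClass A k Y] (p : Submodule A X) (hp : ∀ f : X →ₗ[A] Y, p ≤ LinearMap.ker f) :
    finrank k (X ⧸ p →ₗ[A] Y) = finrank k (X →ₗ[A] Y) :=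
  (LinearEquiv.ofBijective (LinearMap.lcomp k Y p.mkQ)
    ⟨LinearMap.lcomp_injective_of_surjective p.mkQ p.mkQ_surjective,
      fun f => ⟨p.liftQ f (hp f), p.liftQ_mkQ f (hp f)⟩⟩).finrank_eq

theorem Submodule.finrank_linearMap_quotient_le {k : Type*} [Ring k] [StrongRankCondition k]
    [Module k Y] [SMulCommClass A k Y] [Module.Finite k (X →ₗ[A] Y)] (p : Submodule A X) :
    finrank k (X ⧸ p →ₗ[A] Y) ≤ finrank k (X →ₗ[A] Y) :=
  LinearMap.finrank_le_finrank_of_injective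
    (LinearMap.lcomp_injective_of_surjective (S := k) (N := Y) p.mkQ p.mkQ_surjective)

instance Module.Finite.linearMap_of_isScalarTower {k : Type*} [Field k] [Algebra k A]
    [Module k X] [IsScalarTower k A X] [FiniteDimensional k X]
    [Module k Y] [IsScalarTower k A Y] [SMulCommClass A k Y] [FiniteDimensional k Y] :
    Module.Finite k (X →ₗ[A] Y) :=
  .of_injective (LinearMap.restrictScalarsₗ k A X Y k) (LinearMap.restrictScalars_injective k)

end HomSpaces

theorem quotient_pairing_le_canonical_general (n : ℕ) (k A : Type) [Field k] [Ring A] [Algebra k A]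
    (M : Type) [AddCommGroup M] [Module A M]
    (τM : Type) [AddCommGroup τM] [Module A τM] [Module k τM] [IsScalarTower k A τM]
    [FiniteDimensional k τM] [SMulCommClass A k τM]
    (N : Type) [AddCommGroup N] [Module A N] [Module k N] [IsScalarTower k A N]
    [FiniteDimensional k N] [SMulCommClass A k N]
    (dimVec : (X : Type) → [AddCommGroup X] → [Module A X] → Fin n → ℕ)
    (gM : Fin n → ℤ)
    -- the Auslander–Reiten formula characterizing the g-vector of M
    (hAR : ∀ (X : Type) [AddCommGroup X] [Module A X] [Module k X] [IsScalarTower k A X]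
        [FiniteDimensional k X] [SMulCommClass A k X],
      (∑ i, gM i * (dimVec X i : ℤ)) =
        (Module.finrank k (X →ₗ[A] τM) : ℤ) - (Module.finrank k (M →ₗ[A] X) : ℤ))
    -- M is τ-rigid
    (hrigid : ∀ f : M →ₗ[A] τM, f = 0)
    -- canonical sequence: N_t = S ∈ Fac M, N_f = N ⧸ S ∈ M^⊥
    (S : Submodule A N)
    (hFac : ∃ (m : ℕ) (f : (Fin m → M) →ₗ[A] S), Function.Surjective f)
    (hperp : ∀ f : M →ₗ[A] (N ⧸ S), f = 0) :
    (∀ S₀ : Submodule A N,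
      (∑ i, gM i * (dimVec (N ⧸ S₀) i : ℤ)) ≤ ∑ i, gM i * (dimVec (N ⧸ S) i : ℤ)) ∧
    (∑ i, gM i * (dimVec (N ⧸ S) i : ℤ)) = (Module.finrank k (N →ₗ[A] τM) : ℤ) := by
  have : Subsingleton (M →ₗ[A] τM) := ⟨fun f g => (hrigid f).trans (hrigid g).symm⟩
  have : Subsingleton (M →ₗ[A] N ⧸ S) := ⟨fun f g => (hperp f).trans (hperp g).symm⟩
  obtain ⟨m, π, hπ⟩ := hFac
  have hcanonical : (∑ i, gM i * (dimVec (N ⧸ S) i : ℤ)) = finrank k (N →ₗ[A] τM) := by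
    rw [hAR, S.finrank_linearMap_quotient_eq (S.le_ker_of_surjective_pi π hπ),
      finrank_zero_of_subsingleton (M := M →ₗ[A] N ⧸ S), Nat.cast_zero, sub_zero]
  refine ⟨fun S₀ => ?_, hcanonical⟩
  rw [hAR, hcanonical]
  have := S₀.finrank_linearMap_quotient_le (k := k) (Y := τM)
  omega

/-- Let `M` be τ-rigid with AR translate `τM`, and `N` any module.  If
`0 → N_t → N → N_f → 0` is the canonical sequence of `N` with respect to the torsion pair
`(Fac M, M^⊥)` (so `N_t = S ∈ Fac M` and `N_f = N ⧸ S ∈ M^⊥`), then for every quotient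
module `N₀` of `N` one has `⟨g_M, dim N₀⟩ ≤ ⟨g_M, dim N_f⟩ = dim Hom_A(N, τM)`.
The g-vector `g_M` is characterized by the Auslander–Reiten formula. -/
theorem quotient_pairing_le_canonical (n : ℕ) (k A : Type) [Field k] [Ring A] [Algebra k A]
    [FiniteDimensional k A]
    (M : Type) [AddCommGroup M] [Module A M] [Module k M] [IsScalarTower k A M]
    [FiniteDimensional k M] [SMulCommClass A k M]
    (τM : Type) [AddCommGroup τM] [Module A τM] [Module k τM] [IsScalarTower k A τM]
    [FiniteDimensional k τM] [SMulCommClass A k τM]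
    (N : Type) [AddCommGroup N] [Module A N] [Module k N] [IsScalarTower k A N]
    [FiniteDimensional k N] [SMulCommClass A k N]
    (dimVec : (X : Type) → [AddCommGroup X] → [Module A X] → Fin n → ℕ)
    (gM : Fin n → ℤ)
    -- the Auslander–Reiten formula characterizing the g-vector of M
    (hAR : ∀ (X : Type) [AddCommGroup X] [Module A X] [Module k X] [IsScalarTower k A X]
        [FiniteDimensional k X] [SMulCommClass A k X],
      (∑ i, gM i * (dimVec X i : ℤ)) =
        (Module.finrank k (X →ₗ[A] τM) : ℤ) - (Module.finrank k (M →ₗ[A] X) : ℤ))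
    -- M is τ-rigid
    (hrigid : ∀ f : M →ₗ[A] τM, f = 0)
    -- canonical sequence: N_t = S ∈ Fac M, N_f = N ⧸ S ∈ M^⊥
    (S : Submodule A N)
    (hFac : ∃ (m : ℕ) (f : (Fin m → M) →ₗ[A] S), Function.Surjective f)
    (hperp : ∀ f : M →ₗ[A] (N ⧸ S), f = 0) :
    (∀ S₀ : Submodule A N,
      (∑ i, gM i * (dimVec (N ⧸ S₀) i : ℤ)) ≤ ∑ i, gM i * (dimVec (N ⧸ S) i : ℤ)) ∧
    (∑ i, gM i * (dimVec (N ⧸ S) i : ℤ)) = (Module.finrank k (N →ₗ[A] τM) : ℤ) :=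
  quotient_pairing_le_canonical_general n k A M τM N dimVec gM hAR hrigid S hFac hperp
end

section
/- Let A be a finite-dimensional algebra, M a τ-rigid module, and N any module. If 0 → N_t → N → N_f → 0 is the canonical sequence of N with respect to the torsion pair (⊥(τM), Sub τM), then for every submodule N₀ of N, ⟨−g_M, dim N₀⟩ ≤ ⟨−g_M, dim N_t⟩ = dim_k Hom_A(M, N). -/
/-!
By the Auslander–Reiten formula, `-⟨g_M, dim X⟩ = dim Hom(M, X) - dim Hom(X, τM)` for every
module `X`. For `X = N_t` the second term vanishes because `N_t ∈ ⊥(τM)`, and the first is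
`dim Hom(M, N)`: a map `M → N` composed to `N_f ⊆ τMᵐ` is zero by τ-rigidity, so it factors
through `N_t`. For any other submodule `N₀` the first term is at most `dim Hom(M, N)` and the
second is nonnegative.
-/

open Module

instance Submodule.finiteDimensional_of_isScalarTower {k A N : Type*} [Field k] [Ring A]
    [Algebra k A] [AddCommGroup N] [Module A N] [Module k N] [IsScalarTower k A N]
    [FiniteDimensional k N] (P : Submodule A N) : FiniteDimensional k P :=
  .of_injective (P.subtype.restrictScalars k) P.injective_subtype

namespace LinearMap

variable {R M N T : Type*} [Ring R] [AddCommGroup M] [Module R M] [AddCommGroup N] [Module R N]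
  [AddCommGroup T] [Module R T]

theorem range_le_of_injective_quotient_to_pi (hMT : ∀ f : M →ₗ[R] T, f = 0)
    {S : Submodule R N} {ι : Type*} {g : N ⧸ S →ₗ[R] ι → T} (hg : Function.Injective g)
    (f : M →ₗ[R] N) : range f ≤ S := by
  have hcomp : g ∘ₗ S.mkQ ∘ₗ f = 0 := by
    ext x i
    exact LinearMap.congr_fun (hMT (proj i ∘ₗ g ∘ₗ S.mkQ ∘ₗ f)) x
  have hquot : S.mkQ ∘ₗ f = 0 := (cancel_left hg).mp (hcomp.trans (comp_zero g).symm)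
  simpa only [Submodule.ker_mkQ] using range_le_ker_iff.mpr hquot

end LinearMap

section HomIntoSubmodule

variable {k A M N : Type*} [CommSemiring k] [Semiring A] [Algebra k A] [AddCommMonoid M]
  [Module A M] [AddCommMonoid N] [Module A N] [Module k N] [IsScalarTower k A N]

theorem LinearMap.compRight_subtype_injective (P : Submodule A N) :
    Function.Injective (compRight (M := M) k P.subtype) :=
  fun _ _ h => (cancel_left P.injective_subtype).mp h

theorem finrank_hom_submodule_le [StrongRankCondition k] [Module.Finite k (M →ₗ[A] N)]
    (P : Submodule A N) : finrank k (M →ₗ[A] P) ≤ finrank k (M →ₗ[A] N) :=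
  LinearMap.finrank_le_finrank_of_injective (LinearMap.compRight_subtype_injective P)

theorem finrank_hom_submodule_eq_of_forall_range_le {S : Submodule A N}
    (h : ∀ f : M →ₗ[A] N, LinearMap.range f ≤ S) :
    finrank k (M →ₗ[A] S) = finrank k (M →ₗ[A] N) :=
  (LinearEquiv.ofBijective _ ⟨LinearMap.compRight_subtype_injective S, fun f =>
    ⟨f.codRestrict S fun x => h f ⟨x, rfl⟩, f.subtype_comp_codRestrict S _⟩⟩).finrank_eq

end HomIntoSubmodule

theorem submodule_pairing_le_canonical_general (n : ℕ) (k A : Type) [Field k] [Ring A] [Algebra k A]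
    (M : Type) [AddCommGroup M] [Module A M] [Module k M] [IsScalarTower k A M]
    [FiniteDimensional k M]
    (τM : Type) [AddCommGroup τM] [Module A τM] [Module k τM] [SMulCommClass A k τM]
    (N : Type) [AddCommGroup N] [Module A N] [Module k N] [IsScalarTower k A N]
    [FiniteDimensional k N]
    (dimVec : (X : Type) → [AddCommGroup X] → [Module A X] → Fin n → ℕ)
    (gM : Fin n → ℤ)
    -- the Auslander–Reiten formula characterizing the g-vector of M
    (hAR : ∀ (X : Type) [AddCommGroup X] [Module A X] [Module k X] [IsScalarTower k A X]
        [FiniteDimensional k X] [SMulCommClass A k X],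
      (∑ i, gM i * (dimVec X i : ℤ)) =
        (Module.finrank k (X →ₗ[A] τM) : ℤ) - (Module.finrank k (M →ₗ[A] X) : ℤ))
    -- M is τ-rigid
    (hrigid : ∀ f : M →ₗ[A] τM, f = 0)
    -- canonical sequence: N_t = S ∈ ⊥(τM), N_f = N ⧸ S ∈ Sub τM
    (S : Submodule A N)
    (hperp : ∀ f : S →ₗ[A] τM, f = 0)
    (hSub : ∃ (m : ℕ) (f : (N ⧸ S) →ₗ[A] (Fin m → τM)), Function.Injective f) :
    (∀ S₀ : Submodule A N,
      (∑ i, (-gM i) * (dimVec S₀ i : ℤ)) ≤ ∑ i, (-gM i) * (dimVec S i : ℤ)) ∧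
    (∑ i, (-gM i) * (dimVec S i : ℤ)) = (Module.finrank k (M →ₗ[A] N) : ℤ) := by
  have hpairing (P : Submodule A N) : ∑ i, (-gM i) * (dimVec P i : ℤ) =
      finrank k (M →ₗ[A] P) - finrank k (P →ₗ[A] τM) := by
    simp only [neg_mul, Finset.sum_neg_distrib, hAR P]
    ring
  obtain ⟨m, g, hg⟩ := hSub
  have hHomM : finrank k (M →ₗ[A] S) = finrank k (M →ₗ[A] N) :=
    finrank_hom_submodule_eq_of_forall_range_le
      (LinearMap.range_le_of_injective_quotient_to_pi hrigid hg)
  have : Subsingleton (S →ₗ[A] τM) := ⟨fun f f' => (hperp f).trans (hperp f').symm⟩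
  have hHomτM : finrank k (S →ₗ[A] τM) = 0 := finrank_zero_of_subsingleton
  refine ⟨fun S₀ => ?_, by rw [hpairing, hHomM, hHomτM, Nat.cast_zero, sub_zero]⟩
  have hHomS₀ := finrank_hom_submodule_le (k := k) (M := M) S₀
  rw [hpairing, hpairing, hHomM, hHomτM]
  omega

/-- Let `M` be τ-rigid with AR translate `τM`, and `N` any module.  If
`0 → N_t → N → N_f → 0` is the canonical sequence of `N` with respect to the torsion pair
`(⊥(τM), Sub τM)` (so `N_t = S ∈ ⊥(τM)` and `N_f = N ⧸ S ∈ Sub τM`), then for every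
submodule `N₀` of `N` one has `⟨-g_M, dim N₀⟩ ≤ ⟨-g_M, dim N_t⟩ = dim Hom_A(M, N)`. -/
theorem submodule_pairing_le_canonical (n : ℕ) (k A : Type) [Field k] [Ring A] [Algebra k A]
    [FiniteDimensional k A]
    (M : Type) [AddCommGroup M] [Module A M] [Module k M] [IsScalarTower k A M]
    [FiniteDimensional k M] [SMulCommClass A k M]
    (τM : Type) [AddCommGroup τM] [Module A τM] [Module k τM] [IsScalarTower k A τM]
    [FiniteDimensional k τM] [SMulCommClass A k τM]
    (N : Type) [AddCommGroup N] [Module A N] [Module k N] [IsScalarTower k A N]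
    [FiniteDimensional k N] [SMulCommClass A k N]
    (dimVec : (X : Type) → [AddCommGroup X] → [Module A X] → Fin n → ℕ)
    (gM : Fin n → ℤ)
    -- the Auslander–Reiten formula characterizing the g-vector of M
    (hAR : ∀ (X : Type) [AddCommGroup X] [Module A X] [Module k X] [IsScalarTower k A X]
        [FiniteDimensional k X] [SMulCommClass A k X],
      (∑ i, gM i * (dimVec X i : ℤ)) =
        (Module.finrank k (X →ₗ[A] τM) : ℤ) - (Module.finrank k (M →ₗ[A] X) : ℤ))
    -- M is τ-rigid
    (hrigid : ∀ f : M →ₗ[A] τM, f = 0)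
    -- canonical sequence: N_t = S ∈ ⊥(τM), N_f = N ⧸ S ∈ Sub τM
    (S : Submodule A N)
    (hperp : ∀ f : S →ₗ[A] τM, f = 0)
    (hSub : ∃ (m : ℕ) (f : (N ⧸ S) →ₗ[A] (Fin m → τM)), Function.Injective f) :
    (∀ S₀ : Submodule A N,
      (∑ i, (-gM i) * (dimVec S₀ i : ℤ)) ≤ ∑ i, (-gM i) * (dimVec S i : ℤ)) ∧
    (∑ i, (-gM i) * (dimVec S i : ℤ)) = (Module.finrank k (M →ₗ[A] N) : ℤ) :=
  submodule_pairing_le_canonical_general n k A M τM N dimVec gM hAR hrigid S hperp hSub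
end

section
/- Let M be a τ-rigid module over a finite-dimensional algebra A. Then for any module N, the tropical evaluation of the F-polynomial of N at the g-vector of M equals dim_k Hom_A(N, τM), i.e., max over quotient modules N₀ of N of ⟨g_M, dim N₀⟩ equals dim_k Hom_A(N, τM). -/
/-!
Over quotients `N₀` of `N`, `g_M · dim N₀ = dim Hom(N₀, τM) - dim Hom(M, N₀)` is at most
`dim Hom(N, τM)`, since `Hom(N₀, τM)` embeds into `Hom(N, τM)`. The bound is attained by the
largest quotient of `N` cogenerated by `τM`, namely `N` modulo the common kernel of all maps
`N → τM`: every such map factors through it, and it embeds into a product of copies of `τM`,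
so τ-rigidity kills `Hom(M, N₀)`.
-/

namespace Submodule

variable {k A : Type*} [DivisionRing k] [Ring A]
  {M N P : Type*} [AddCommGroup M] [AddCommGroup N] [AddCommGroup P]
  [Module A M] [Module A N] [Module A P] [Module k P] [SMulCommClass A k P]

theorem finrank_linearMap_quotient_le_s14 [FiniteDimensional k (N →ₗ[A] P)] (S : Submodule A N) :
    Module.finrank k (N ⧸ S →ₗ[A] P) ≤ Module.finrank k (N →ₗ[A] P) :=
  LinearMap.finrank_le_finrank_of_injective
    (LinearMap.lcomp_injective_of_surjective _ S.mkQ_surjective)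

variable (A N P) in
def reject : Submodule A N :=
  ⨅ f : N →ₗ[A] P, LinearMap.ker f

theorem reject_eq_ker_pi : reject A N P = LinearMap.ker (LinearMap.pi fun f : N →ₗ[A] P => f) :=
  (LinearMap.ker_pi _).symm

theorem reject_le_ker (f : N →ₗ[A] P) : reject A N P ≤ LinearMap.ker f :=
  iInf_le _ f

theorem injective_liftQ_reject :
    Function.Injective ((reject A N P).liftQ (LinearMap.pi fun f : N →ₗ[A] P => f)
      reject_eq_ker_pi.le) := by
  rw [← LinearMap.ker_eq_bot]
  exact ker_liftQ_eq_bot' _ _ reject_eq_ker_pi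

theorem subsingleton_linearMap_of_injective_pi {ι : Type*} [Subsingleton (M →ₗ[A] P)]
    {X : Type*} [AddCommGroup X] [Module A X] {j : X →ₗ[A] ι → P} (hj : Function.Injective j) :
    Subsingleton (M →ₗ[A] X) := by
  refine ⟨fun g₁ g₂ => LinearMap.ext fun m => hj ?_⟩
  ext i
  exact LinearMap.congr_fun
    (Subsingleton.elim (LinearMap.proj i ∘ₗ j ∘ₗ g₁) (LinearMap.proj i ∘ₗ j ∘ₗ g₂)) m

theorem subsingleton_linearMap_quotient_reject [Subsingleton (M →ₗ[A] P)] :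
    Subsingleton (M →ₗ[A] N ⧸ reject A N P) :=
  subsingleton_linearMap_of_injective_pi injective_liftQ_reject

theorem finrank_linearMap_quotient_reject :
    Module.finrank k (N ⧸ reject A N P →ₗ[A] P) = Module.finrank k (N →ₗ[A] P) := by
  have hsurj : Function.Surjective (LinearMap.lcomp k P (reject A N P).mkQ) := fun f =>
    ⟨(reject A N P).liftQ f (reject_le_ker f), (reject A N P).liftQ_mkQ f (reject_le_ker f)⟩
  exact LinearEquiv.finrank_eq (LinearEquiv.ofBijective _
    ⟨LinearMap.lcomp_injective_of_surjective _ (reject A N P).mkQ_surjective, hsurj⟩)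

end Submodule

theorem trop_F_eval_g_eq_hom_tau_general (n : ℕ) (k A : Type) [Field k] [Ring A] [Algebra k A]
    (M : Type) [AddCommGroup M] [Module A M]
    (τM : Type) [AddCommGroup τM] [Module A τM] [Module k τM] [IsScalarTower k A τM]
    [FiniteDimensional k τM]
    (N : Type) [AddCommGroup N] [Module A N] [Module k N] [IsScalarTower k A N]
    [FiniteDimensional k N]
    (dimVec : (X : Type) → [AddCommGroup X] → [Module A X] → Fin n → ℕ)
    (gM : Fin n → ℤ)
    -- the Auslander–Reiten formula characterizing the g-vector of M
    (hAR : ∀ (X : Type) [AddCommGroup X] [Module A X] [Module k X] [IsScalarTower k A X]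
        [FiniteDimensional k X] [SMulCommClass A k X],
      (∑ i, gM i * (dimVec X i : ℤ)) =
        (Module.finrank k (X →ₗ[A] τM) : ℤ) - (Module.finrank k (M →ₗ[A] X) : ℤ))
    -- M is τ-rigid
    (hrigid : ∀ f : M →ₗ[A] τM, f = 0) :
    IsGreatest {x : ℤ | ∃ S : Submodule A N, x = ∑ i, gM i * (dimVec (N ⧸ S) i : ℤ)}
      (Module.finrank k (N →ₗ[A] τM) : ℤ) := by
  have : Subsingleton (M →ₗ[A] τM) := ⟨fun f g => (hrigid f).trans (hrigid g).symm⟩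
  have hM : Module.finrank k (M →ₗ[A] N ⧸ Submodule.reject A N τM) = 0 := by
    have := Submodule.subsingleton_linearMap_quotient_reject (A := A) (M := M) (N := N) (P := τM)
    exact Module.finrank_zero_of_subsingleton
  refine ⟨⟨Submodule.reject A N τM, ?_⟩, ?_⟩
  · rw [hAR, Submodule.finrank_linearMap_quotient_reject, hM, Nat.cast_zero, sub_zero]
  · rintro _ ⟨S, rfl⟩
    rw [hAR]
    have := Submodule.finrank_linearMap_quotient_le_s14 (k := k) (P := τM) S
    omega

/-- For a τ-rigid module `M` and any module `N`, the tropical evaluation of the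
F-polynomial of `N` at the g-vector of `M`, i.e. the maximum of `⟨g_M, dim N₀⟩` over all
quotient modules `N₀` of `N`, equals `dim_k Hom_A(N, τM)`. -/
theorem trop_F_eval_g_eq_hom_tau (n : ℕ) (k A : Type) [Field k] [Ring A] [Algebra k A]
    [FiniteDimensional k A]
    (M : Type) [AddCommGroup M] [Module A M] [Module k M] [IsScalarTower k A M]
    [FiniteDimensional k M] [SMulCommClass A k M]
    (τM : Type) [AddCommGroup τM] [Module A τM] [Module k τM] [IsScalarTower k A τM]
    [FiniteDimensional k τM] [SMulCommClass A k τM]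
    (N : Type) [AddCommGroup N] [Module A N] [Module k N] [IsScalarTower k A N]
    [FiniteDimensional k N] [SMulCommClass A k N]
    (dimVec : (X : Type) → [AddCommGroup X] → [Module A X] → Fin n → ℕ)
    (gM : Fin n → ℤ)
    -- the Auslander–Reiten formula characterizing the g-vector of M
    (hAR : ∀ (X : Type) [AddCommGroup X] [Module A X] [Module k X] [IsScalarTower k A X]
        [FiniteDimensional k X] [SMulCommClass A k X],
      (∑ i, gM i * (dimVec X i : ℤ)) =
        (Module.finrank k (X →ₗ[A] τM) : ℤ) - (Module.finrank k (M →ₗ[A] X) : ℤ))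
    -- M is τ-rigid
    (hrigid : ∀ f : M →ₗ[A] τM, f = 0) :
    IsGreatest {x : ℤ | ∃ S : Submodule A N, x = ∑ i, gM i * (dimVec (N ⧸ S) i : ℤ)}
      (Module.finrank k (N →ₗ[A] τM) : ℤ) :=
  trop_F_eval_g_eq_hom_tau_general n k A M τM N dimVec gM hAR hrigid
end

section
/- Let (M, P) be a τ-rigid pair over a finite-dimensional algebra A (M is τ-rigid, P projective, Hom_A(P, M) = 0). Then for any module N: the maximum of ⟨g_M − g_P, dim N₀⟩ over quotient modules N₀ of N equals dim Hom_A(N, τM) + dim Hom_A(P, N). -/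
/-!
Write `⟨g_M − g_P, dim N/S⟩ = hom(N/S, τM) − hom(M, N/S) + hom(P, N/S)` using the two pairing
formulas. Since `N → N/S` is onto, `hom(N/S, τM) ≤ hom(N, τM)`, and since `P` is projective,
`hom(P, N/S) ≤ hom(P, N)`; this gives the upper bound. It is attained when `S` is the torsion part
of `N` for `(Fac M, M^⊥)`: then `Hom(M, N/S) = 0`, every map `N → τM` kills `S` because `S` is
built from quotients of `M` and `Hom(M, τM) = 0`, and no nonzero map `P → N` lands in `S` because
`Hom(P, M) = 0`.
-/

open Module Submodule LinearMap

section HomSpaces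

variable (k : Type) {A : Type} [Field k] [Ring A]

instance finiteDimensional_linearMap [Algebra k A] {X Y : Type}
    [AddCommGroup X] [Module A X] [Module k X] [IsScalarTower k A X] [FiniteDimensional k X]
    [AddCommGroup Y] [Module A Y] [Module k Y] [IsScalarTower k A Y] [SMulCommClass A k Y]
    [FiniteDimensional k Y] :
    FiniteDimensional k (X →ₗ[A] Y) :=
  FiniteDimensional.of_injective (restrictScalarsₗ k A X Y k) (restrictScalars_injective k)

section FromQuotient

variable {X Y : Type} [AddCommGroup X] [Module A X]
  [AddCommGroup Y] [Module A Y] [Module k Y] [SMulCommClass A k Y] (S : Submodule A X)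

theorem finrank_linearMap_quotient_le [FiniteDimensional k (X →ₗ[A] Y)] :
    finrank k (X ⧸ S →ₗ[A] Y) ≤ finrank k (X →ₗ[A] Y) :=
  finrank_le_finrank_of_injective (lcomp_injective_of_surjective (S := k) _ S.mkQ_surjective)

theorem finrank_linearMap_quotient_eq (hS : ∀ φ : X →ₗ[A] Y, S ≤ ker φ) :
    finrank k (X ⧸ S →ₗ[A] Y) = finrank k (X →ₗ[A] Y) :=
  LinearEquiv.finrank_eq <| LinearEquiv.ofBijective (lcomp k Y S.mkQ)
    ⟨lcomp_injective_of_surjective _ S.mkQ_surjective,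
      fun φ => ⟨S.liftQ φ (hS φ), S.liftQ_mkQ φ (hS φ)⟩⟩

end FromQuotient

section ToQuotient

variable [Algebra k A] {X Y : Type}
  [AddCommGroup X] [Module A X] [Module k X] [IsScalarTower k A X] [SMulCommClass A k X]
  [AddCommGroup Y] [Module A Y] [Projective A Y] (S : Submodule A X)

theorem surjective_compRight_mkQ :
    Function.Surjective (compRight k S.mkQ : (Y →ₗ[A] X) →ₗ[k] (Y →ₗ[A] X ⧸ S)) :=
  fun g => projective_lifting_property S.mkQ g S.mkQ_surjective

theorem finrank_linearMap_to_quotient_le [FiniteDimensional k (Y →ₗ[A] X)] :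
    finrank k (Y →ₗ[A] X ⧸ S) ≤ finrank k (Y →ₗ[A] X) := by
  have h := finrank_range_le (compRight k S.mkQ : (Y →ₗ[A] X) →ₗ[k] (Y →ₗ[A] X ⧸ S))
  rwa [range_eq_top.2 (surjective_compRight_mkQ k S), finrank_top] at h

theorem finrank_linearMap_to_quotient_eq (hS : ∀ g : Y →ₗ[A] X, range g ≤ S → g = 0) :
    finrank k (Y →ₗ[A] X ⧸ S) = finrank k (Y →ₗ[A] X) := by
  refine (LinearEquiv.finrank_eq <| LinearEquiv.ofBijective (compRight k S.mkQ)
    ⟨fun g g' hgg' => ?_, surjective_compRight_mkQ k S⟩).symm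
  rw [← sub_eq_zero]
  refine hS _ ?_
  rw [← ker_mkQ S, range_le_ker_iff, comp_sub, sub_eq_zero]
  exact hgg'

end ToQuotient

end HomSpaces

section Trace

variable {A : Type} [Ring A] (M : Type) [AddCommGroup M] [Module A M]
variable {P Q N Z : Type} [AddCommGroup P] [Module A P] [AddCommGroup Q] [Module A Q]
  [AddCommGroup N] [Module A N] [AddCommGroup Z] [Module A Z]

/-- The trace of `M` in `Q`: the sum of the images of all maps `M → Q`. -/
noncomputable def traceOf (Q : Type) [AddCommGroup Q] [Module A Q] : Submodule A Q :=
  range (Finsupp.lsum ℕ fun f : M →ₗ[A] Q => f)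

noncomputable def traceStep (S : Submodule A N) : Submodule A N :=
  comap S.mkQ (traceOf M (N ⧸ S))

variable {M}

theorem range_le_traceOf (f : M →ₗ[A] Q) : range f ≤ traceOf M Q := by
  rintro _ ⟨x, rfl⟩
  exact ⟨Finsupp.single f x, by simp⟩

theorem traceOf_le_ker (hM : ∀ f : M →ₗ[A] Z, f = 0) (φ : Q →ₗ[A] Z) :
    traceOf M Q ≤ ker φ := by
  rw [traceOf, range_le_ker_iff]
  refine Finsupp.lhom_ext fun f x => ?_
  simpa using congr($(hM (φ ∘ₗ f)) x)

theorem eq_zero_of_range_le_traceOf [Projective A P] (hPM : ∀ f : P →ₗ[A] M, f = 0)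
    (g : P →ₗ[A] Q) (hg : range g ≤ traceOf M Q) : g = 0 := by
  set ε := Finsupp.lsum ℕ fun f : M →ₗ[A] Q => f
  obtain ⟨l, hl⟩ := projective_lifting_property ε.rangeRestrict
    (g.codRestrict _ fun p => hg ⟨p, rfl⟩) ε.surjective_rangeRestrict
  have hl0 : l = 0 := by
    ext p f
    simpa using congr($(hPM (Finsupp.lapply f ∘ₗ l)) p)
  ext p
  calc g p = ε (l p) := congr(Subtype.val ($hl p)).symm
    _ = 0 := by rw [hl0, LinearMap.zero_apply, map_zero]

theorem le_traceStep (S : Submodule A N) : S ≤ traceStep M S :=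
  (ker_mkQ S).ge.trans (ker_le_comap S.mkQ)

theorem traceStep_le_ker (hM : ∀ f : M →ₗ[A] Z, f = 0) {S : Submodule A N} {φ : N →ₗ[A] Z}
    (hS : S ≤ ker φ) : traceStep M S ≤ ker φ :=
  calc traceStep M S ≤ comap S.mkQ (ker (S.liftQ φ hS)) := comap_mono (traceOf_le_ker hM _)
    _ = ker φ := by rw [← ker_comp, liftQ_mkQ]

theorem eq_zero_of_range_le_traceStep [Projective A P] (hPM : ∀ f : P →ₗ[A] M, f = 0)
    {S : Submodule A N} (hS : ∀ g : P →ₗ[A] N, range g ≤ S → g = 0) (g : P →ₗ[A] N)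
    (hg : range g ≤ traceStep M S) : g = 0 := by
  have hgS : S.mkQ ∘ₗ g = 0 :=
    eq_zero_of_range_le_traceOf hPM _ (by rw [range_comp]; exact map_le_iff_le_comap.2 hg)
  refine hS g ?_
  rwa [← ker_mkQ S, range_le_ker_iff]

theorem eq_zero_of_traceStep_le {S : Submodule A N} (h : traceStep M S ≤ S)
    (f : M →ₗ[A] N ⧸ S) : f = 0 := by
  rw [← range_eq_bot, eq_bot_iff, ← S.mkQ_map_self]
  calc range f ≤ traceOf M (N ⧸ S) := range_le_traceOf f
    _ = map S.mkQ (traceStep M S) := (map_comap_eq_of_surjective S.mkQ_surjective _).symm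
    _ ≤ map S.mkQ S := map_mono h

/-- `S` plays the role of the torsion part `tN` of `N` for `(Fac M, M^⊥)`. It is taken maximal
among the submodules with the last two properties, which `traceStep` preserves. -/
theorem exists_torsion_submodule [IsNoetherian A N] [Projective A P]
    (hM : ∀ f : M →ₗ[A] Z, f = 0) (hPM : ∀ f : P →ₗ[A] M, f = 0) :
    ∃ S : Submodule A N, (∀ f : M →ₗ[A] N ⧸ S, f = 0) ∧ (∀ φ : N →ₗ[A] Z, S ≤ ker φ) ∧
      ∀ g : P →ₗ[A] N, range g ≤ S → g = 0 := by
  obtain ⟨S, ⟨hZ, hP⟩, hmax⟩ := set_has_maximal_iff_noetherian.2 ‹_›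
    {S : Submodule A N | (∀ φ : N →ₗ[A] Z, S ≤ ker φ) ∧ ∀ g : P →ₗ[A] N, range g ≤ S → g = 0}
    ⟨⊥, fun _ => bot_le, fun g hg => range_eq_bot.1 (le_bot_iff.1 hg)⟩
  have hstep : traceStep M S ≤ S :=
    not_lt_iff_le_imp_ge.1
      (hmax _ ⟨fun φ => traceStep_le_ker hM (hZ φ), eq_zero_of_range_le_traceStep hPM hP⟩)
      (le_traceStep S)
  exact ⟨S, eq_zero_of_traceStep_le hstep, hZ, hP⟩

end Trace

theorem trop_F_eval_pair_eq_E_proj_general (n : ℕ) (k A : Type) [Field k] [Ring A] [Algebra k A]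
    (M : Type) [AddCommGroup M] [Module A M]
    (τM : Type) [AddCommGroup τM] [Module A τM] [Module k τM] [IsScalarTower k A τM]
    [FiniteDimensional k τM] [SMulCommClass A k τM]
    (P : Type) [AddCommGroup P] [Module A P] [Module k P] [IsScalarTower k A P]
    [FiniteDimensional k P] [Module.Projective A P]
    (N : Type) [AddCommGroup N] [Module A N] [Module k N] [IsScalarTower k A N]
    [FiniteDimensional k N] [SMulCommClass A k N]
    (dimVec : (X : Type) → [AddCommGroup X] → [Module A X] → Fin n → ℕ)
    (gM gP : Fin n → ℤ)
    -- the Auslander–Reiten formula characterizing the g-vector of M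
    (hARM : ∀ (X : Type) [AddCommGroup X] [Module A X] [Module k X] [IsScalarTower k A X]
        [FiniteDimensional k X] [SMulCommClass A k X],
      (∑ i, gM i * (dimVec X i : ℤ)) =
        (Module.finrank k (X →ₗ[A] τM) : ℤ) - (Module.finrank k (M →ₗ[A] X) : ℤ))
    -- the pairing formula characterizing the g-vector of the projective P
    (hgP : ∀ (X : Type) [AddCommGroup X] [Module A X] [Module k X] [IsScalarTower k A X]
        [FiniteDimensional k X] [SMulCommClass A k X],
      (∑ i, gP i * (dimVec X i : ℤ)) = -(Module.finrank k (P →ₗ[A] X) : ℤ))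
    -- (M, P) is a τ-rigid pair
    (hrigid : ∀ f : M →ₗ[A] τM, f = 0)
    (hPM : ∀ f : P →ₗ[A] M, f = 0) :
    IsGreatest {x : ℤ | ∃ S : Submodule A N, x = ∑ i, (gM i - gP i) * (dimVec (N ⧸ S) i : ℤ)}
      ((Module.finrank k (N →ₗ[A] τM) : ℤ) + (Module.finrank k (P →ₗ[A] N) : ℤ)) := by
  have pairing : ∀ S : Submodule A N, ∑ i, (gM i - gP i) * (dimVec (N ⧸ S) i : ℤ) =
      finrank k (N ⧸ S →ₗ[A] τM) - finrank k (M →ₗ[A] N ⧸ S) + finrank k (P →ₗ[A] N ⧸ S) := by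
    intro S
    simp only [sub_mul, Finset.sum_sub_distrib, hARM (N ⧸ S), hgP (N ⧸ S)]
    ring
  have : IsNoetherian A N := isNoetherian_of_tower k inferInstance
  obtain ⟨S₀, hM, hτ, hP⟩ := exists_torsion_submodule (N := N) hrigid hPM
  refine ⟨⟨S₀, ?_⟩, ?_⟩
  · have : Subsingleton (M →ₗ[A] N ⧸ S₀) := ⟨fun f g => (hM f).trans (hM g).symm⟩
    rw [pairing, finrank_linearMap_quotient_eq k S₀ hτ, finrank_linearMap_to_quotient_eq k S₀ hP,
      finrank_zero_of_subsingleton (R := k) (M := M →ₗ[A] N ⧸ S₀)]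
    ring
  · rintro _ ⟨S, rfl⟩
    have hτM := finrank_linearMap_quotient_le k S (Y := τM)
    have hPN := finrank_linearMap_to_quotient_le k S (Y := P)
    rw [pairing]
    omega

/-- For a τ-rigid pair `(M, P)` (`M` τ-rigid, `P` projective, `Hom_A(P, M) = 0`) and any
module `N`, the maximum of `⟨g_M - g_P, dim N₀⟩` over all quotient modules `N₀` of `N`
equals `dim Hom_A(N, τM) + dim Hom_A(P, N)`. -/
theorem trop_F_eval_pair_eq_E_proj (n : ℕ) (k A : Type) [Field k] [Ring A] [Algebra k A]
    [FiniteDimensional k A]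
    (M : Type) [AddCommGroup M] [Module A M] [Module k M] [IsScalarTower k A M]
    [FiniteDimensional k M] [SMulCommClass A k M]
    (τM : Type) [AddCommGroup τM] [Module A τM] [Module k τM] [IsScalarTower k A τM]
    [FiniteDimensional k τM] [SMulCommClass A k τM]
    (P : Type) [AddCommGroup P] [Module A P] [Module k P] [IsScalarTower k A P]
    [FiniteDimensional k P] [SMulCommClass A k P] [Module.Projective A P]
    (N : Type) [AddCommGroup N] [Module A N] [Module k N] [IsScalarTower k A N]
    [FiniteDimensional k N] [SMulCommClass A k N]
    (dimVec : (X : Type) → [AddCommGroup X] → [Module A X] → Fin n → ℕ)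
    (gM gP : Fin n → ℤ)
    -- the Auslander–Reiten formula characterizing the g-vector of M
    (hARM : ∀ (X : Type) [AddCommGroup X] [Module A X] [Module k X] [IsScalarTower k A X]
        [FiniteDimensional k X] [SMulCommClass A k X],
      (∑ i, gM i * (dimVec X i : ℤ)) =
        (Module.finrank k (X →ₗ[A] τM) : ℤ) - (Module.finrank k (M →ₗ[A] X) : ℤ))
    -- the pairing formula characterizing the g-vector of the projective P
    (hgP : ∀ (X : Type) [AddCommGroup X] [Module A X] [Module k X] [IsScalarTower k A X]
        [FiniteDimensional k X] [SMulCommClass A k X],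
      (∑ i, gP i * (dimVec X i : ℤ)) = -(Module.finrank k (P →ₗ[A] X) : ℤ))
    -- (M, P) is a τ-rigid pair
    (hrigid : ∀ f : M →ₗ[A] τM, f = 0)
    (hPM : ∀ f : P →ₗ[A] M, f = 0) :
    IsGreatest {x : ℤ | ∃ S : Submodule A N, x = ∑ i, (gM i - gP i) * (dimVec (N ⧸ S) i : ℤ)}
      ((Module.finrank k (N →ₗ[A] τM) : ℤ) + (Module.finrank k (P →ₗ[A] N) : ℤ)) :=
  trop_F_eval_pair_eq_E_proj_general n k A M τM P N dimVec gM gP hARM hgP hrigid hPM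
end

section
/- Let (M, P) be a τ-rigid pair over a finite-dimensional algebra A. A module N belongs to ⊥(τM) ∩ P^⊥ (that is, Hom_A(N, τM) = 0 and Hom_A(P, N) = 0) if and only if ⟨g_M − g_P, dim N₀⟩ ≤ 0 for every quotient module N₀ of N. -/
/-!
Evaluated on a quotient `X` of `N`, the pairing is
`dim Hom(X, τM) - dim Hom(M, X) + dim Hom(P, X)`. If `Hom(N, τM) = 0 = Hom(P, N)` the first and
last terms vanish, since both conditions pass to quotients (`P` being projective). Conversely,
for `f : N → τM` the quotient `N / ker f` embeds in `τM`, so τ-rigidity kills `Hom(M, N / ker f)`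
and nonpositivity then kills the induced map. Finally `Hom(P, N / S) = 0` by Noetherian induction
on `S`: otherwise nonpositivity gives a nonzero `h : M → N / S`, the preimage `S'` of its range
is strictly larger than `S`, so by induction every `g : P → N / S` lands in `range h`, lifts
through `h`, and vanishes because `Hom(P, M) = 0`.
-/

open Module Submodule LinearMap

section Vanishing

variable {A : Type*} [Ring A] {M P X Y Z : Type*}
  [AddCommGroup M] [Module A M] [AddCommGroup P] [Module A P]
  [AddCommGroup X] [Module A X] [AddCommGroup Y] [Module A Y] [AddCommGroup Z] [Module A Z]

lemma LinearMap.subsingleton_of_injective {f : X →ₗ[A] Y} (hf : Function.Injective f)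
    [Subsingleton (M →ₗ[A] Y)] : Subsingleton (M →ₗ[A] X) :=
  ⟨fun _ _ => (cancel_left hf).1 (Subsingleton.elim _ _)⟩

lemma LinearMap.subsingleton_of_surjective {f : X →ₗ[A] Y} (hf : Function.Surjective f)
    [Subsingleton (X →ₗ[A] Z)] : Subsingleton (Y →ₗ[A] Z) :=
  ⟨fun _ _ => (cancel_right hf).1 (Subsingleton.elim _ _)⟩

lemma Module.Projective.subsingleton_of_surjective [Projective A P] {f : X →ₗ[A] Y}
    (hf : Function.Surjective f) [Subsingleton (P →ₗ[A] X)] : Subsingleton (P →ₗ[A] Y) :=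
  ⟨fun a b => by
    obtain ⟨φ, rfl⟩ := projective_lifting_property f a hf
    obtain ⟨ψ, rfl⟩ := projective_lifting_property f b hf
    rw [Subsingleton.elim φ ψ]⟩

lemma Module.Projective.eq_zero_of_range_le [Projective A P] [Subsingleton (P →ₗ[A] M)]
    (h : M →ₗ[A] X) {g : P →ₗ[A] X} (hg : range g ≤ range h) : g = 0 := by
  obtain ⟨φ, hφ⟩ := projective_lifting_property h.rangeRestrict
    (g.codRestrict (range h) fun p => hg (mem_range_self g p)) h.surjective_rangeRestrict
  ext p
  simpa [Subsingleton.elim φ 0] using congr(($hφ.symm p : X))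

lemma Module.Projective.subsingleton_of_forall_quotient [Projective A P] [IsNoetherian A X]
    [Subsingleton (P →ₗ[A] M)]
    (hM : ∀ S : Submodule A X, Nontrivial (P →ₗ[A] X ⧸ S) → Nontrivial (M →ₗ[A] X ⧸ S)) :
    Subsingleton (P →ₗ[A] X) := by
  suffices hquot : ∀ S : Submodule A X, Subsingleton (P →ₗ[A] X ⧸ S) by
    have := hquot ⊥
    exact subsingleton_of_injective (f := (⊥ : Submodule A X).mkQ) (ker_eq_bot.1 (ker_mkQ ⊥))
  refine IsNoetherian.induction fun S ih => ?_
  by_contra hP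
  rw [not_subsingleton_iff_nontrivial] at hP
  obtain ⟨h, hh⟩ := @exists_ne _ (hM S hP) 0
  set S' := (range h).comap S.mkQ
  have hlt : S < S' := by
    simpa [S'] using
      comap_strictMono_of_surjective S.mkQ_surjective (bot_lt_iff_ne_bot.2 (range_eq_bot.not.2 hh))
  have := ih S' hlt
  let π := S.mapQ S' LinearMap.id (by simpa using hlt.le)
  have hker : ker π = range h := by
    rw [ker_mapQ, comap_id, map_comap_eq_of_surjective S.mkQ_surjective]
  refine not_subsingleton (P →ₗ[A] X ⧸ S) (subsingleton_of_forall_eq 0 fun g => ?_)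
  exact eq_zero_of_range_le h (hker ▸ range_le_ker_iff.2 (Subsingleton.elim _ _))

end Vanishing

section FiniteDimensional

variable {k A : Type*} [Field k] [Ring A] [Algebra k A] {M N T : Type*}
  [AddCommGroup M] [Module A M]
  [AddCommGroup N] [Module A N] [Module k N] [IsScalarTower k A N] [FiniteDimensional k N]
  [AddCommGroup T] [Module A T] [Module k T] [IsScalarTower k A T] [FiniteDimensional k T]

lemma LinearMap.eq_zero_of_forall_finrank_quotient_le [Subsingleton (M →ₗ[A] T)]
    (h : ∀ S : Submodule A N, finrank k (N ⧸ S →ₗ[A] T) ≤ finrank k (M →ₗ[A] N ⧸ S))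
    (f : N →ₗ[A] T) : f = 0 := by
  have hinj : Function.Injective ((ker f).liftQ f le_rfl) :=
    ker_eq_bot.1 (ker_liftQ_eq_bot _ _ _ le_rfl)
  have : Subsingleton (M →ₗ[A] N ⧸ ker f) := subsingleton_of_injective hinj
  have : Subsingleton (N ⧸ ker f →ₗ[A] T) :=
    finrank_zero_iff.1 (Nat.le_zero.1 ((h _).trans_eq (finrank_zero_of_subsingleton)))
  rw [← (ker f).liftQ_mkQ f le_rfl, Subsingleton.elim ((ker f).liftQ f le_rfl) 0, zero_comp]

end FiniteDimensional

theorem mem_perp_iff_pairing_nonpos_general (n : ℕ) (k A : Type) [Field k] [Ring A] [Algebra k A]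
    (M : Type) [AddCommGroup M] [Module A M]
    (τM : Type) [AddCommGroup τM] [Module A τM] [Module k τM] [IsScalarTower k A τM]
    [FiniteDimensional k τM]
    (P : Type) [AddCommGroup P] [Module A P] [Module k P] [IsScalarTower k A P]
    [FiniteDimensional k P] [Module.Projective A P]
    (N : Type) [AddCommGroup N] [Module A N] [Module k N] [IsScalarTower k A N]
    [FiniteDimensional k N]
    (dimVec : (X : Type) → [AddCommGroup X] → [Module A X] → Fin n → ℕ)
    (gM gP : Fin n → ℤ)
    -- the Auslander–Reiten formula characterizing the g-vector of M
    (hARM : ∀ (X : Type) [AddCommGroup X] [Module A X] [Module k X] [IsScalarTower k A X]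
        [FiniteDimensional k X] [SMulCommClass A k X],
      (∑ i, gM i * (dimVec X i : ℤ)) =
        (Module.finrank k (X →ₗ[A] τM) : ℤ) - (Module.finrank k (M →ₗ[A] X) : ℤ))
    -- the pairing formula characterizing the g-vector of the projective P
    (hgP : ∀ (X : Type) [AddCommGroup X] [Module A X] [Module k X] [IsScalarTower k A X]
        [FiniteDimensional k X] [SMulCommClass A k X],
      (∑ i, gP i * (dimVec X i : ℤ)) = -(Module.finrank k (P →ₗ[A] X) : ℤ))
    -- (M, P) is a τ-rigid pair
    (hrigid : ∀ f : M →ₗ[A] τM, f = 0)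
    (hPM : ∀ f : P →ₗ[A] M, f = 0) :
    ((∀ f : N →ₗ[A] τM, f = 0) ∧ (∀ f : P →ₗ[A] N, f = 0)) ↔
      (∀ S : Submodule A N, (∑ i, (gM i - gP i) * (dimVec (N ⧸ S) i : ℤ)) ≤ 0) := by
  have hpair : ∀ S : Submodule A N, (∑ i, (gM i - gP i) * (dimVec (N ⧸ S) i : ℤ)) =
      finrank k (N ⧸ S →ₗ[A] τM) - finrank k (M →ₗ[A] N ⧸ S) + finrank k (P →ₗ[A] N ⧸ S) := by
    intro S
    simp only [sub_mul, Finset.sum_sub_distrib, hARM, hgP]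
    ring
  have : Subsingleton (M →ₗ[A] τM) := subsingleton_of_forall_eq 0 hrigid
  have : Subsingleton (P →ₗ[A] M) := subsingleton_of_forall_eq 0 hPM
  constructor
  · rintro ⟨hNτ, hPN⟩ S
    have : Subsingleton (N →ₗ[A] τM) := subsingleton_of_forall_eq 0 hNτ
    have : Subsingleton (P →ₗ[A] N) := subsingleton_of_forall_eq 0 hPN
    have : Subsingleton (N ⧸ S →ₗ[A] τM) := subsingleton_of_surjective S.mkQ_surjective
    have : Subsingleton (P →ₗ[A] N ⧸ S) := Projective.subsingleton_of_surjective S.mkQ_surjective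
    simp [hpair, finrank_zero_of_subsingleton]
  · intro hneg
    have hle : ∀ S : Submodule A N, finrank k (N ⧸ S →ₗ[A] τM) + finrank k (P →ₗ[A] N ⧸ S) ≤
        finrank k (M →ₗ[A] N ⧸ S) := fun S => by
      have := hpair S ▸ hneg S
      omega
    have hNτ : ∀ f : N →ₗ[A] τM, f = 0 :=
      eq_zero_of_forall_finrank_quotient_le (M := M) fun S => le_self_add.trans (hle S)
    have : Subsingleton (N →ₗ[A] τM) := subsingleton_of_forall_eq 0 hNτ
    have : IsNoetherian A N := isNoetherian_of_tower k inferInstance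
    have : Subsingleton (P →ₗ[A] N) := Projective.subsingleton_of_forall_quotient (M := M)
      fun S hP => by
        have : Subsingleton (N ⧸ S →ₗ[A] τM) := subsingleton_of_surjective S.mkQ_surjective
        have hS := hle S
        rw [finrank_zero_of_subsingleton, zero_add] at hS
        exact nontrivial_of_finrank_pos (R := k) (finrank_pos.trans_le hS)
    exact ⟨hNτ, fun g => Subsingleton.elim g 0⟩

/-- For a τ-rigid pair `(M, P)`, a module `N` lies in `⊥(τM) ∩ P^⊥` if and only if
`⟨g_M - g_P, dim N₀⟩ ≤ 0` for every quotient module `N₀` of `N`. -/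
theorem mem_perp_iff_pairing_nonpos (n : ℕ) (k A : Type) [Field k] [Ring A] [Algebra k A]
    [FiniteDimensional k A]
    (M : Type) [AddCommGroup M] [Module A M] [Module k M] [IsScalarTower k A M]
    [FiniteDimensional k M] [SMulCommClass A k M]
    (τM : Type) [AddCommGroup τM] [Module A τM] [Module k τM] [IsScalarTower k A τM]
    [FiniteDimensional k τM] [SMulCommClass A k τM]
    (P : Type) [AddCommGroup P] [Module A P] [Module k P] [IsScalarTower k A P]
    [FiniteDimensional k P] [SMulCommClass A k P] [Module.Projective A P]
    (N : Type) [AddCommGroup N] [Module A N] [Module k N] [IsScalarTower k A N]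
    [FiniteDimensional k N] [SMulCommClass A k N]
    (dimVec : (X : Type) → [AddCommGroup X] → [Module A X] → Fin n → ℕ)
    (gM gP : Fin n → ℤ)
    -- the Auslander–Reiten formula characterizing the g-vector of M
    (hARM : ∀ (X : Type) [AddCommGroup X] [Module A X] [Module k X] [IsScalarTower k A X]
        [FiniteDimensional k X] [SMulCommClass A k X],
      (∑ i, gM i * (dimVec X i : ℤ)) =
        (Module.finrank k (X →ₗ[A] τM) : ℤ) - (Module.finrank k (M →ₗ[A] X) : ℤ))
    -- the pairing formula characterizing the g-vector of the projective P
    (hgP : ∀ (X : Type) [AddCommGroup X] [Module A X] [Module k X] [IsScalarTower k A X]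
        [FiniteDimensional k X] [SMulCommClass A k X],
      (∑ i, gP i * (dimVec X i : ℤ)) = -(Module.finrank k (P →ₗ[A] X) : ℤ))
    -- (M, P) is a τ-rigid pair
    (hrigid : ∀ f : M →ₗ[A] τM, f = 0)
    (hPM : ∀ f : P →ₗ[A] M, f = 0) :
    ((∀ f : N →ₗ[A] τM, f = 0) ∧ (∀ f : P →ₗ[A] N, f = 0)) ↔
      (∀ S : Submodule A N, (∑ i, (gM i - gP i) * (dimVec (N ⧸ S) i : ℤ)) ≤ 0) :=
  mem_perp_iff_pairing_nonpos_general n k A M τM P N dimVec gM gP hARM hgP hrigid hPM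
end
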